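/- arXiv:2512.07607 — 2 statements merged into one kernel-verified Lean document; each statement's English description precedes it below -/
import Mathlib

section
/- Let L be an A-field of A-characteristic zero, let ψ and φ be Drinfeld modules over L with ψ_t = θ + Σ_{i=1}^m α_iτ^i (α_m ≠ 0) and φ_t = θ + Σ_{i=1}^n β_iτ^i (β_n ≠ 0), and let w ∈ L{τ}. Consider the equation ψ_t·c − c·φ_t = w for c ∈ L{τ}. Then: (i) if the constant term of w is nonzero, the equation has no solution; (ii) if c and c' are both solutions and have the same constant term, then c = c'; (iii) if w ≠ 0 and c is a solution, then deg_τ c ≥ deg_τ w − max(m,n); (iv) if m ≠ n and c ≠ 0 is a solution, then deg_τ w = deg_τ c + max(m,n). -/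
open Polynomial Matrix Finset

noncomputable section

/-- Twisted ("skew") multiplication of polynomials in `τ`, determined by the rule
`τ · c = c^q · τ`:  `(Σᵢ aᵢτ^i) · (Σⱼ bⱼτ^j) = Σ_{i,j} aᵢ bⱼ^(q^i) τ^(i+j)`. -/
def twMul {K : Type*} [Field K] (q : ℕ) (f g : Polynomial K) : Polynomial K :=
  f.sum fun i a => g.sum fun j b => Polynomial.C (a * b ^ q ^ i) * Polynomial.X ^ (i + j)

/-- Twisted multiplication of matrices over the twisted polynomial ring `K{τ}`. -/
def twMatMul {K : Type*} [Field K] (q : ℕ) {α β γ : Type*} [Fintype β]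
    (A : Matrix α β (Polynomial K)) (B : Matrix β γ (Polynomial K)) :
    Matrix α γ (Polynomial K) :=
  Matrix.of fun i k => ∑ j, twMul q (A i j) (B j k)

/-- `ψ` is (the value at `t` of) a Drinfeld module of rank `r` over the `A`-field `(K, θ)`. -/
def IsDrinfeld {K : Type*} [Field K] (θ : K) (r : ℕ) (ψ : Polynomial K) : Prop :=
  1 ≤ r ∧ ψ.coeff 0 = θ ∧ ψ.natDegree = r ∧ ψ.coeff r ≠ 0

/-- `Υ` is (the value at `t` of) a triangular t-module of dimension `n` with diagonal
Drinfeld modules `ψ 0 = ψ₁, …, ψ (n-1) = ψₙ` of ranks `r 0, …, r (n-1)`:  `Υ` is lower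
triangular and its `(k,k)` diagonal entry is `ψ k.rev` (so `ψₙ` is top-left and
`ψ₁` is bottom-right). -/
def IsTriangular {K : Type*} [Field K] (θ : K) {n : ℕ}
    (Υ : Matrix (Fin n) (Fin n) (Polynomial K))
    (ψ : Fin n → Polynomial K) (r : Fin n → ℕ) : Prop :=
  (∀ i j : Fin n, i < j → Υ i j = 0) ∧
  (∀ k : Fin n, Υ k k = ψ k.rev) ∧
  (∀ i : Fin n, IsDrinfeld θ (r i) (ψ i))

section AuxTw
variable {L : Type*} [Field L] {q : ℕ}

lemma twMul_coeff (hq : q ≠ 0) (f g : L[X]) (N : ℕ) :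
    (twMul q f g).coeff N = ∑ i ∈ Finset.range (N+1), f.coeff i * g.coeff (N-i) ^ q ^ i := by
  unfold twMul
  rw [Polynomial.sum_def, Polynomial.finset_sum_coeff]
  have inner : ∀ i ∈ f.support,
      (Polynomial.sum g fun j b => C (f.coeff i * b ^ q ^ i) * X ^ (i+j)).coeff N
        = if i ≤ N then f.coeff i * g.coeff (N - i) ^ q ^ i else 0 := by
    intro i _
    rw [Polynomial.sum_def, Polynomial.finset_sum_coeff]
    simp only [Polynomial.coeff_C_mul, Polynomial.coeff_X_pow, mul_ite, mul_one, mul_zero]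
    by_cases h : i ≤ N
    · rw [if_pos h]
      by_cases hmem : N - i ∈ g.support
      · rw [Finset.sum_eq_single_of_mem (N - i) hmem]
        · rw [if_pos (by omega)]
        · intro j _ hne
          rw [if_neg (by omega)]
      · have h0 : g.coeff (N - i) = 0 := Polynomial.notMem_support_iff.mp hmem
        rw [h0, zero_pow (pow_ne_zero i hq), mul_zero]
        apply Finset.sum_eq_zero
        intro j hj
        rw [if_neg]
        intro hc
        exact hmem (by rwa [show N - i = j by omega])
    · rw [if_neg h]
      apply Finset.sum_eq_zero
      intro j _
      rw [if_neg (by omega)]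
  rw [Finset.sum_congr rfl inner, ← Finset.sum_filter]
  apply Finset.sum_subset
  · intro i hi
    simp only [Finset.mem_filter] at hi
    exact Finset.mem_range.mpr (by omega)
  · intro i hi hni
    simp only [Finset.mem_filter, Polynomial.mem_support_iff] at hni
    have : f.coeff i = 0 := by
      by_contra hc
      exact hni ⟨hc, by have := Finset.mem_range.mp hi; omega⟩
    rw [this, zero_mul]

lemma twMul_natDegree_le (hq : q ≠ 0) (f g : L[X]) :
    (twMul q f g).natDegree ≤ f.natDegree + g.natDegree := by
  rw [Polynomial.natDegree_le_iff_coeff_eq_zero]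
  intro N hN
  rw [twMul_coeff hq]
  apply Finset.sum_eq_zero
  intro i _
  rcases le_or_gt i f.natDegree with h | h
  · have : g.coeff (N - i) = 0 := Polynomial.coeff_eq_zero_of_natDegree_lt (by omega)
    rw [this, zero_pow (pow_ne_zero i hq), mul_zero]
  · rw [Polynomial.coeff_eq_zero_of_natDegree_lt h, zero_mul]

lemma twMul_coeff_top (hq : q ≠ 0) (f g : L[X]) :
    (twMul q f g).coeff (f.natDegree + g.natDegree)
      = f.coeff f.natDegree * g.coeff g.natDegree ^ q ^ f.natDegree := by
  rw [twMul_coeff hq]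
  rw [Finset.sum_eq_single_of_mem f.natDegree (Finset.mem_range.mpr (by omega))]
  · rw [show f.natDegree + g.natDegree - f.natDegree = g.natDegree from by omega]
  · intro i _ hne
    rcases lt_or_gt_of_ne hne with h | h
    · have : g.coeff (f.natDegree + g.natDegree - i) = 0 :=
        Polynomial.coeff_eq_zero_of_natDegree_lt (by omega)
      rw [this, zero_pow (pow_ne_zero i hq), mul_zero]
    · rw [Polynomial.coeff_eq_zero_of_natDegree_lt h, zero_mul]

lemma twMul_natDegree (hq : q ≠ 0) {f g : L[X]} (hf : f ≠ 0) (hg : g ≠ 0) :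
    (twMul q f g).natDegree = f.natDegree + g.natDegree := by
  refine le_antisymm (twMul_natDegree_le hq f g) (Polynomial.le_natDegree_of_ne_zero ?_)
  rw [twMul_coeff_top hq]
  exact mul_ne_zero (Polynomial.leadingCoeff_ne_zero.mpr hf)
    (pow_ne_zero _ (Polynomial.leadingCoeff_ne_zero.mpr hg))

lemma twMul_sub_left (hq : q ≠ 0) (f h g : L[X]) :
    twMul q (f - h) g = twMul q f g - twMul q h g := by
  ext N
  simp only [Polynomial.coeff_sub, twMul_coeff hq, ← Finset.sum_sub_distrib]
  exact Finset.sum_congr rfl fun i _ => by rw [sub_mul]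

lemma twMul_sub_right {p s : ℕ} [Fact p.Prime] [CharP L p] (hq : q = p ^ s)
    (f g h : L[X]) : twMul q f (g - h) = twMul q f g - twMul q f h := by
  have hq0 : q ≠ 0 := by rw [hq]; exact pow_ne_zero _ (Fact.out : p.Prime).ne_zero
  ext N
  simp only [Polynomial.coeff_sub, twMul_coeff hq0, ← Finset.sum_sub_distrib]
  refine Finset.sum_congr rfl fun i _ => ?_
  rw [hq, ← pow_mul, sub_pow_char_pow, ← mul_sub]


lemma twMul_zero_left (g : L[X]) : twMul q 0 g = 0 := by
  unfold twMul; exact Polynomial.sum_zero_index _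

lemma twMul_zero_right (hq0 : q ≠ 0) (f : L[X]) : twMul q f 0 = 0 := by
  ext N
  rw [twMul_coeff hq0]
  simp [zero_pow (pow_ne_zero _ hq0)]

lemma twMul_key_zero (hq0 : q ≠ 0) (θ : L) (hθpow : ∀ N, 1 ≤ N → θ ^ q ^ N ≠ θ)
    {ψ φ d : L[X]} (hψ0 : ψ.coeff 0 = θ) (hφ0 : φ.coeff 0 = θ)
    (heq : twMul q ψ d = twMul q d φ) (h0 : d.coeff 0 = 0) : d = 0 := by
  have hall : ∀ N, d.coeff N = 0 := by
    intro N
    induction N using Nat.strong_induction_on with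
    | _ N ih =>
      rcases Nat.eq_zero_or_pos N with rfl | hN
      · exact h0
      · have hco := congrArg (fun x => Polynomial.coeff x N) heq
        simp only [twMul_coeff hq0] at hco
        rw [Finset.sum_eq_single_of_mem 0 (Finset.mem_range.mpr (by omega)),
            Finset.sum_eq_single_of_mem N (Finset.mem_range.mpr (by omega))] at hco
        · rw [Nat.sub_zero, pow_zero, pow_one, Nat.sub_self] at hco
          rw [hψ0, hφ0] at hco
          by_contra hd
          exact hθpow N hN (mul_left_cancel₀ hd (by linear_combination -hco))
        all_goals
          intro i hi hne
          have hi' := Finset.mem_range.mp hi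
          first
            | rw [ih i (by omega), zero_mul]
            | rw [ih (N - i) (by omega), zero_pow (pow_ne_zero _ hq0), mul_zero]
  ext N
  simp [hall N]

end AuxTw

/-- the key lemma on the equation `ψ_t·c − c·φ_t = w`.
Over an `A`-field `L` of `A`-characteristic zero, for Drinfeld modules `ψ` (rank `m`)
and `φ` (rank `n`) and `w ∈ L{τ}`:
(i) if the constant term of `w` is nonzero the equation has no solution;
(ii) a solution is uniquely determined by its constant term;
(iii) if `w ≠ 0` then every solution `c` satisfies `deg_τ c ≥ deg_τ w − max(m,n)`;
(iv) if `m ≠ n` then every nonzero solution `c` satisfies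
`deg_τ w = deg_τ c + max(m,n)`. -/
theorem drinfeld_intertwining_equation
    {L : Type*} [Field L] (p s q : ℕ) [Fact p.Prime] (hs : 0 < s) (hq : q = p ^ s)
    [Algebra (GaloisField p s) L] (θ : L)
    (hθ : Transcendental (GaloisField p s) θ)
    (m n : ℕ) (ψ φ : Polynomial L)
    (hψ : IsDrinfeld θ m ψ) (hφ : IsDrinfeld θ n φ)
    (w : Polynomial L) :
    (w.coeff 0 ≠ 0 → ¬ ∃ c : Polynomial L, twMul q ψ c - twMul q c φ = w) ∧
    (∀ c c' : Polynomial L,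
      twMul q ψ c - twMul q c φ = w → twMul q ψ c' - twMul q c' φ = w →
      c.coeff 0 = c'.coeff 0 → c = c') ∧
    (∀ c : Polynomial L, twMul q ψ c - twMul q c φ = w → w ≠ 0 →
      w.natDegree - max m n ≤ c.natDegree) ∧
    (m ≠ n → ∀ c : Polynomial L, twMul q ψ c - twMul q c φ = w → c ≠ 0 →
      w.natDegree = c.natDegree + max m n) := by
  obtain ⟨hm1, hψ0, hψdeg, hψm⟩ := hψ
  obtain ⟨hn1, hφ0, hφdeg, hφn⟩ := hφ
  haveI : CharP L p :=
    charP_of_injective_algebraMap (algebraMap (GaloisField p s) L).injective p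
  have hp2 : 2 ≤ p := (Fact.out : p.Prime).two_le
  have hq0 : q ≠ 0 := by rw [hq]; exact pow_ne_zero _ (by omega)
  have hq2 : 2 ≤ q := by
    rw [hq]
    calc 2 ≤ p := hp2
    _ = p ^ 1 := (pow_one p).symm
    _ ≤ p ^ s := Nat.pow_le_pow_right (by omega) hs
  have hθpow : ∀ N, 1 ≤ N → θ ^ q ^ N ≠ θ := by
    intro N hN h
    apply hθ
    refine ⟨X ^ q ^ N - X, ?_, ?_⟩
    · intro h0
      have h1 : 1 < q ^ N := Nat.one_lt_pow (by omega) (by omega)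
      have hco := congrArg (fun P => Polynomial.coeff P (q ^ N)) h0
      simp only [Polynomial.coeff_sub, Polynomial.coeff_X_pow, if_pos rfl,
        Polynomial.coeff_X, Polynomial.coeff_zero,
        if_neg (show ¬(1 : ℕ) = q ^ N by omega)] at hco
      norm_num at hco
    · simp only [map_sub, map_pow, Polynomial.aeval_X, h, sub_self]
  refine ⟨?_, ?_, ?_, ?_⟩
  · rintro hw0 ⟨c, hc⟩
    apply hw0
    have hco := congrArg (fun P => Polynomial.coeff P 0) hc
    simp only [Polynomial.coeff_sub, twMul_coeff hq0, zero_add, Finset.sum_range_one,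
      Nat.sub_zero, pow_zero, pow_one] at hco
    rw [hψ0, hφ0] at hco
    linear_combination -hco
  · intro c c' h1 h2 h0
    have hd : twMul q ψ (c - c') = twMul q (c - c') φ := by
      rw [twMul_sub_right hq, twMul_sub_left hq0]
      have : twMul q ψ c - twMul q c φ = twMul q ψ c' - twMul q c' φ := by rw [h1, h2]
      linear_combination this
    have := twMul_key_zero hq0 θ hθpow hψ0 hφ0 hd
      (by rw [Polynomial.coeff_sub, h0, sub_self])
    exact sub_eq_zero.mp this
  · intro c hc hw
    have hdegw : w.natDegree ≤ c.natDegree + max m n := by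
      rw [← hc]
      refine le_trans (Polynomial.natDegree_sub_le _ _) ?_
      have b1 := twMul_natDegree_le hq0 ψ c
      have b2 := twMul_natDegree_le hq0 c φ
      rw [hψdeg] at b1
      rw [hφdeg] at b2
      rw [max_le_iff]
      omega
    omega
  · intro hmn c hc hcne
    have hψne : ψ ≠ 0 := fun h => hψm (by rw [h]; simp)
    have hφne : φ ≠ 0 := fun h => hφn (by rw [h]; simp)
    have d1 : (twMul q ψ c).natDegree = m + c.natDegree := by
      rw [twMul_natDegree hq0 hψne hcne, hψdeg]
    have d2 : (twMul q c φ).natDegree = c.natDegree + n := by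
      rw [twMul_natDegree hq0 hcne hφne, hφdeg]
    rcases lt_or_gt_of_ne hmn with h | h
    · rw [← hc, Polynomial.natDegree_sub_eq_right_of_natDegree_lt (by omega), d2,
        max_eq_right h.le]
    · rw [← hc, Polynomial.natDegree_sub_eq_left_of_natDegree_lt (by omega), d1,
        max_eq_left h.le]
      omega
end
end

section
/- Let K be an A-field and Υ a triangular t-module of dimension n over K with no nilpotence (∂Υ_t = θ·I_n), whose diagonal Drinfeld modules ψ_1,…,ψ_n have ranks r_1,…,r_n all ≥ 2. For a row vector δ ∈ Mat_{1×n}(K{τ}), write its entry lying in the column whose diagonal entry is ψ_{j,t} as p_j (so δ = [p_n, p_{n−1}, …, p_1] reading columns left to right). Then the set V of row vectors δ all of whose entries p_j have zero constant term and τ-degree strictly less than r_j is a complete and irredundant set of representatives for Der_0(Υ,C) modulo Der_in(Υ,C): for every row vector δ ∈ Mat_{1×n}(K{τ}) with ∂δ = 0 there exists a unique δ' ∈ V such that δ − δ' = U·Υ_t − C_t·U for some U ∈ Mat_{1×n}(K{τ}). In particular the 𝔽_q-linear map V → Der_0(Υ,C)/Der_{in,0}(Υ,C) is a bijection. -/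
open Polynomial Matrix Finset

noncomputable section

namespace TwAux


variable {K : Type*} [Field K] {q : ℕ}

lemma twMul_zero_left (g : K[X]) : twMul q 0 g = 0 := by
  simp [twMul]

lemma twMul_zero_right (f : K[X]) : twMul q f 0 = 0 := by
  simp [twMul, Polynomial.sum]

lemma twMul_coeff (hq0 : q ≠ 0) (f g : K[X]) (k : ℕ) :
    (twMul q f g).coeff k = ∑ i ∈ range (k + 1), f.coeff i * (g.coeff (k - i)) ^ q ^ i := by
  unfold twMul
  rw [Polynomial.sum_def, Polynomial.finset_sum_coeff]
  have h1 : ∀ i ∈ f.support,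
      (Polynomial.sum g fun j b => C (f.coeff i * b ^ q ^ i) * X ^ (i + j)).coeff k
        = if i ≤ k then f.coeff i * (g.coeff (k - i)) ^ q ^ i else 0 := by
    intro i _
    rw [Polynomial.sum_def, Polynomial.finset_sum_coeff]
    simp_rw [Polynomial.coeff_C_mul, Polynomial.coeff_X_pow, mul_ite, mul_one, mul_zero]
    by_cases hik : i ≤ k
    · rw [if_pos hik]
      have hsum : (∑ j ∈ g.support, if k = i + j then f.coeff i * g.coeff j ^ q ^ i else 0)
          = if k - i ∈ g.support then f.coeff i * g.coeff (k - i) ^ q ^ i else 0 := by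
        rw [← Finset.sum_ite_eq' g.support (k - i) (fun j => f.coeff i * g.coeff j ^ q ^ i)]
        apply Finset.sum_congr rfl
        intro j _
        apply if_congr _ rfl rfl
        omega
      rw [hsum]
      by_cases hmem : k - i ∈ g.support
      · rw [if_pos hmem]
      · rw [if_neg hmem, notMem_support_iff.mp hmem, zero_pow (pow_ne_zero _ hq0), mul_zero]
    · rw [if_neg hik]
      apply Finset.sum_eq_zero
      intro j _
      rw [if_neg (by omega)]
  rw [Finset.sum_congr rfl h1, ← Finset.sum_filter]
  apply Finset.sum_subset
  · intro i hi
    simp only [Finset.mem_filter, Finset.mem_range] at hi ⊢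
    omega
  · intro i hi hni
    simp only [Finset.mem_filter, Finset.mem_range] at hi hni
    have : f.coeff i = 0 := by
      by_contra h
      exact hni ⟨mem_support_iff.mpr h, by omega⟩
    rw [this, zero_mul]

lemma twMul_natDegree_le (hq0 : q ≠ 0) (f g : K[X]) :
    (twMul q f g).natDegree ≤ f.natDegree + g.natDegree := by
  apply natDegree_le_iff_coeff_eq_zero.mpr
  intro N hN
  rw [twMul_coeff hq0]
  apply Finset.sum_eq_zero
  intro i _
  by_cases hfi : f.natDegree < i
  · rw [coeff_eq_zero_of_natDegree_lt hfi, zero_mul]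
  · push_neg at hfi
    have : g.natDegree < N - i := by omega
    rw [coeff_eq_zero_of_natDegree_lt this, zero_pow (pow_ne_zero _ hq0), mul_zero]

lemma twMul_coeff_top (hq0 : q ≠ 0) (f g : K[X]) :
    (twMul q f g).coeff (f.natDegree + g.natDegree)
      = f.coeff f.natDegree * (g.coeff g.natDegree) ^ q ^ f.natDegree := by
  rw [twMul_coeff hq0, Finset.sum_eq_single f.natDegree]
  · rw [Nat.add_sub_cancel_left]
  · intro i hi hne
    rcases lt_or_gt_of_ne hne with h | h
    · have : g.natDegree < f.natDegree + g.natDegree - i := by omega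
      rw [coeff_eq_zero_of_natDegree_lt this, zero_pow (pow_ne_zero _ hq0), mul_zero]
    · rw [coeff_eq_zero_of_natDegree_lt h, zero_mul]
  · intro h
    exact absurd (Finset.mem_range.mpr (by omega)) h

lemma twMul_coeff_zero (hq0 : q ≠ 0) (f g : K[X]) :
    (twMul q f g).coeff 0 = f.coeff 0 * g.coeff 0 := by
  rw [twMul_coeff hq0]
  simp

lemma twMul_add_left (hq0 : q ≠ 0) (f₁ f₂ g : K[X]) :
    twMul q (f₁ + f₂) g = twMul q f₁ g + twMul q f₂ g := by
  ext k
  simp only [coeff_add, twMul_coeff hq0, ← Finset.sum_add_distrib]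
  exact Finset.sum_congr rfl fun i _ => by rw [add_mul]

lemma twMul_sub_left (hq0 : q ≠ 0) (f₁ f₂ g : K[X]) :
    twMul q (f₁ - f₂) g = twMul q f₁ g - twMul q f₂ g := by
  ext k
  simp only [coeff_sub, twMul_coeff hq0, ← Finset.sum_sub_distrib]
  exact Finset.sum_congr rfl fun i _ => by rw [sub_mul]

lemma twMul_add_right (hq0 : q ≠ 0)
    (hadd : ∀ (i : ℕ) (x y : K), (x + y) ^ q ^ i = x ^ q ^ i + y ^ q ^ i) (f g₁ g₂ : K[X]) :
    twMul q f (g₁ + g₂) = twMul q f g₁ + twMul q f g₂ := by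
  ext k
  simp only [coeff_add, twMul_coeff hq0, ← Finset.sum_add_distrib]
  exact Finset.sum_congr rfl fun i _ => by rw [hadd, mul_add]

lemma twMul_sub_right (hq0 : q ≠ 0)
    (hsub : ∀ (i : ℕ) (x y : K), (x - y) ^ q ^ i = x ^ q ^ i - y ^ q ^ i) (f g₁ g₂ : K[X]) :
    twMul q f (g₁ - g₂) = twMul q f g₁ - twMul q f g₂ := by
  ext k
  simp only [coeff_sub, twMul_coeff hq0, ← Finset.sum_sub_distrib]
  exact Finset.sum_congr rfl fun i _ => by rw [hsub, mul_sub]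


lemma natDegree_CX_le (θ : K) : (C θ + X).natDegree ≤ 1 :=
  le_trans (natDegree_add_le _ _) (by simp)

lemma drinfeld_unique (hq0 : q ≠ 0) {θ : K} {r : ℕ} {ψ : K[X]}
    (hψ : IsDrinfeld θ r ψ) (hr : 2 ≤ r) (u p' : K[X])
    (hdeg : p'.natDegree < r)
    (heq : p' = twMul q u ψ - twMul q (C θ + X) u) : u = 0 := by
  by_contra hu
  obtain ⟨hr1, hθ, hdψ, har⟩ := hψ
  have hc : p'.coeff (u.natDegree + r) = 0 :=
    coeff_eq_zero_of_natDegree_lt (by omega)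
  rw [heq, coeff_sub] at hc
  have h1 : (twMul q u ψ).coeff (u.natDegree + r)
      = u.coeff u.natDegree * (ψ.coeff r) ^ q ^ u.natDegree := by
    have h := twMul_coeff_top hq0 u ψ
    rw [hdψ] at h
    exact h
  have h2 : (twMul q (C θ + X) u).coeff (u.natDegree + r) = 0 := by
    apply coeff_eq_zero_of_natDegree_lt
    have h3 := twMul_natDegree_le hq0 (C θ + X) u
    have h4 := natDegree_CX_le θ
    omega
  rw [h1, h2, sub_zero] at hc
  have h5 : u.coeff u.natDegree ≠ 0 := by
    rwa [coeff_natDegree, leadingCoeff_ne_zero]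
  exact (mul_ne_zero h5 (pow_ne_zero _ har)) hc

lemma drinfeld_exists (hq0 : q ≠ 0)
    (hadd : ∀ (i : ℕ) (x y : K), (x + y) ^ q ^ i = x ^ q ^ i + y ^ q ^ i)
    {θ : K} {r : ℕ} {ψ : K[X]} (hψ : IsDrinfeld θ r ψ) (hr : 2 ≤ r) :
    ∀ (N : ℕ) (pp : K[X]), pp.natDegree ≤ N →
      ∃ u p', p'.natDegree < r ∧ pp - p' = twMul q u ψ - twMul q (C θ + X) u := by
  obtain ⟨hr1, hθ0, hdψ, har⟩ := hψ
  intro N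
  induction N using Nat.strong_induction_on with
  | _ N ih =>
  intro pp hp
  by_cases hlt : pp.natDegree < r
  · exact ⟨0, pp, hlt, by rw [twMul_zero_left, twMul_zero_right, sub_self, sub_self]⟩
  · push_neg at hlt
    have hp0 : pp ≠ 0 := by
      intro h
      rw [h, natDegree_zero] at hlt
      omega
    set d := pp.natDegree with hd
    have hdr : r ≤ d := hlt
    have hA : (ψ.coeff r) ^ q ^ (d - r) ≠ 0 := pow_ne_zero _ har
    have hpc : pp.coeff d ≠ 0 := by
      rw [hd, coeff_natDegree, leadingCoeff_ne_zero]; exact hp0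
    set e := pp.coeff d / (ψ.coeff r) ^ q ^ (d - r) with he
    have he0 : e ≠ 0 := div_ne_zero hpc hA
    set u₀ : K[X] := C e * X ^ (d - r) with hu₀
    have hu₀d : u₀.natDegree = d - r := by
      rw [hu₀, natDegree_C_mul_X_pow _ _ he0]
    set p₁ := pp - twMul q u₀ ψ + twMul q (C θ + X) u₀ with hp₁
    have hkey : ∀ k, d ≤ k → p₁.coeff k = 0 := by
      intro k hk
      have hb : (twMul q (C θ + X) u₀).coeff k = 0 := by
        apply coeff_eq_zero_of_natDegree_lt
        have h3 := twMul_natDegree_le hq0 (C θ + X) u₀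
        have h4 := natDegree_CX_le θ
        omega
      rw [hp₁, coeff_add, coeff_sub, hb, add_zero]
      rcases eq_or_lt_of_le hk with hkd | hkd
      · have htop : (twMul q u₀ ψ).coeff d = e * (ψ.coeff r) ^ q ^ (d - r) := by
          have h := twMul_coeff_top hq0 u₀ ψ
          rw [hu₀d, hdψ, Nat.sub_add_cancel hdr] at h
          rw [h]
          congr 1
          rw [hu₀]
          simp [coeff_C_mul, coeff_X_pow]
        rw [← hkd, htop, he, div_mul_cancel₀ _ hA, sub_self]
      · rw [coeff_eq_zero_of_natDegree_lt (show pp.natDegree < k from hkd),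
          coeff_eq_zero_of_natDegree_lt
            (lt_of_le_of_lt (twMul_natDegree_le hq0 u₀ ψ) (by rw [hu₀d, hdψ]; omega)),
          sub_self]
    have hp₁d : p₁.natDegree < d := by
      by_cases h0 : p₁ = 0
      · rw [h0, natDegree_zero]; omega
      · by_contra hcon
        push_neg at hcon
        exact (leadingCoeff_ne_zero.mpr h0) (hkey _ hcon)
    obtain ⟨u₁, p', hp'd, heq⟩ := ih p₁.natDegree (by omega) p₁ le_rfl
    refine ⟨u₀ + u₁, p', hp'd, ?_⟩
    rw [twMul_add_left hq0, twMul_add_right hq0 hadd]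
    have hsplit : pp - p' = (twMul q u₀ ψ - twMul q (C θ + X) u₀) + (p₁ - p') := by
      rw [hp₁]; ring
    rw [hsplit, heq]; ring

end TwAux

/-- canonical representatives for `Der₀(Υ,C)/Der_in(Υ,C)`.
Let `Υ` be a triangular t-module with no nilpotence (`∂Υ_t = θ·Iₙ`) whose diagonal
Drinfeld modules have ranks `≥ 2`.  For every biderivation `δ ∈ Der₀(Υ,C)` (a row
vector with zero constant terms) there is a unique row vector `δ'` whose entry in the
column carrying `ψ_{b.rev}` has zero constant term and `τ`-degree `< r_{b.rev}`, such
that `δ − δ'` is an inner biderivation `U·Υ_t − C_t·U`. -/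
theorem reduced_representatives_of_Der
    {K : Type*} [Field K] (p s q : ℕ) [Fact p.Prime] (hs : 0 < s) (hq : q = p ^ s)
    [Algebra (GaloisField p s) K] (θ : K) {n : ℕ}
    (Υ : Matrix (Fin n) (Fin n) (Polynomial K))
    (ψ : Fin n → Polynomial K) (r : Fin n → ℕ)
    (hΥ : IsTriangular θ Υ ψ r)
    (hnil : ∀ a b : Fin n, (Υ a b).coeff 0 = if a = b then θ else 0)
    (hr : ∀ i : Fin n, 2 ≤ r i) :
    ∀ δ : Fin n → Polynomial K, (∀ b : Fin n, (δ b).coeff 0 = 0) →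
      ∃! δ' : Fin n → Polynomial K,
        (∀ b : Fin n, (δ' b).coeff 0 = 0 ∧ (δ' b).natDegree < r b.rev) ∧
        ∃ U : Fin n → Polynomial K,
          ∀ b : Fin n, δ b - δ' b =
            (∑ a, twMul q (U a) (Υ a b))
              - twMul q (Polynomial.C θ + Polynomial.X) (U b) := by
  have hpp : p.Prime := Fact.out
  haveI : CharP K p := charP_of_injective_algebraMap (algebraMap (GaloisField p s) K).injective p
  have hq0 : q ≠ 0 := by rw [hq]; exact pow_ne_zero _ hpp.ne_zero
  have hadd : ∀ (i : ℕ) (x y : K), (x + y) ^ q ^ i = x ^ q ^ i + y ^ q ^ i := by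
    intro i x y
    rw [hq, ← pow_mul]
    exact add_pow_char_pow x y p (s * i)
  have hsub : ∀ (i : ℕ) (x y : K), (x - y) ^ q ^ i = x ^ q ^ i - y ^ q ^ i := by
    intro i x y
    rw [hq, ← pow_mul]
    exact sub_pow_char_pow x y (s * i)
  obtain ⟨htri, hdiag, hdrin⟩ := hΥ
  intro δ hδ
  have zero_c : ∀ (U' δ'' : Fin n → Polynomial K),
      (∀ b : Fin n, δ b - δ'' b = (∑ a, twMul q (U' a) (Υ a b)) - twMul q (C θ + X) (U' b)) →
      ∀ b : Fin n, (δ'' b).coeff 0 = 0 := by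
    intro U' δ'' h b
    have hc := congrArg (fun f : Polynomial K => f.coeff 0) (h b)
    simp only [coeff_sub, Polynomial.finset_sum_coeff, TwAux.twMul_coeff_zero hq0] at hc
    have hs0 : (∑ a, (U' a).coeff 0 * (Υ a b).coeff 0) = (U' b).coeff 0 * θ := by
      rw [Finset.sum_eq_single b]
      · rw [hnil b b, if_pos rfl]
      · intro a _ hab
        rw [hnil a b, if_neg hab, mul_zero]
      · intro hb; exact absurd (Finset.mem_univ b) hb
    have hCt : (Polynomial.C θ + Polynomial.X).coeff 0 = θ := by simp
    rw [hs0, hCt, hδ b, mul_comm, sub_self] at hc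
    rwa [zero_sub, neg_eq_zero] at hc
  have EX : ∀ m : ℕ, m ≤ n → ∃ U δ' : Fin n → Polynomial K,
      (∀ a : Fin n, (a : ℕ) < n - m → U a = 0) ∧
      (∀ b : Fin n, n - m ≤ (b : ℕ) →
        (δ' b).natDegree < r b.rev ∧
        δ b - δ' b = (∑ a, twMul q (U a) (Υ a b)) - twMul q (C θ + X) (U b)) := by
    intro m
    induction m with
    | zero =>
      intro _
      refine ⟨0, 0, fun a _ => rfl, fun b hb => absurd hb ?_⟩
      have := b.isLt
      omega
    | succ m ihm =>
      intro hm
      obtain ⟨U, δ', hU0, hcols⟩ := ihm (by omega)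
      have hmn : m < n := by omega
      obtain ⟨b₀, hb₀v⟩ : ∃ b₀ : Fin n, (b₀ : ℕ) = n - (m + 1) := ⟨⟨n - (m + 1), by omega⟩, rfl⟩
      obtain ⟨u, p', hp'd, heq⟩ := TwAux.drinfeld_exists hq0 hadd (hdrin b₀.rev) (hr b₀.rev)
        ((δ b₀ - ∑ a, twMul q (U a) (Υ a b₀)).natDegree)
        (δ b₀ - ∑ a, twMul q (U a) (Υ a b₀)) le_rfl
      refine ⟨Function.update U b₀ u, Function.update δ' b₀ p', ?_, ?_⟩
      · intro a ha
        rw [Function.update_of_ne (Fin.ne_of_val_ne (by omega))]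
        exact hU0 a (by omega)
      · intro b hb
        by_cases hbb : b = b₀
        · subst hbb
          rw [Function.update_self, Function.update_self]
          refine ⟨hp'd, ?_⟩
          have hU0b : U b = 0 := hU0 b (by omega)
          have hsum : (∑ a, twMul q (Function.update U b u a) (Υ a b))
              = twMul q u (Υ b b) + ∑ a, twMul q (U a) (Υ a b) := by
            rw [← Finset.add_sum_erase _ _ (Finset.mem_univ b)]
            conv_rhs => rw [← Finset.add_sum_erase _ (fun a => twMul q (U a) (Υ a b))
              (Finset.mem_univ b)]
            rw [Function.update_self, hU0b, TwAux.twMul_zero_left, zero_add]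
            congr 1
            apply Finset.sum_congr rfl
            intro a ha
            rw [Function.update_of_ne (Finset.ne_of_mem_erase ha)]
          rw [hsum, hdiag b]
          linear_combination heq
        · have hbne : (b : ℕ) ≠ n - (m + 1) := by
            intro h
            exact hbb (Fin.val_injective (by rw [h, hb₀v]))
          have hbgt : n - m ≤ (b : ℕ) := by omega
          obtain ⟨h1, h2⟩ := hcols b hbgt
          rw [Function.update_of_ne hbb, Function.update_of_ne hbb]
          refine ⟨h1, ?_⟩
          have hsum : (∑ a, twMul q (Function.update U b₀ u a) (Υ a b))
              = ∑ a, twMul q (U a) (Υ a b) := by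
            apply Finset.sum_congr rfl
            intro a _
            by_cases hab : a = b₀
            · subst hab
              have hΥ0 : Υ a b = 0 := htri a b (by rw [Fin.lt_def]; omega)
              rw [hΥ0, TwAux.twMul_zero_right, TwAux.twMul_zero_right]
            · rw [Function.update_of_ne hab]
          rw [hsum]
          exact h2
  obtain ⟨U, δ', hU0, hcols⟩ := EX n le_rfl
  have hall : ∀ b : Fin n, (δ' b).natDegree < r b.rev ∧
      δ b - δ' b = (∑ a, twMul q (U a) (Υ a b)) - twMul q (C θ + X) (U b) :=
    fun b => hcols b (by omega)
  refine ⟨δ', ⟨fun b => ⟨zero_c U δ' (fun b => (hall b).2) b, (hall b).1⟩,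
    U, fun b => (hall b).2⟩, ?_⟩
  rintro y ⟨hy1, U'', hy2⟩
  have hWeq : ∀ b : Fin n, y b - δ' b
      = (∑ a, twMul q ((fun a => U a - U'' a) a) (Υ a b))
        - twMul q (C θ + X) (U b - U'' b) := by
    intro b
    have h1 := (hall b).2
    have h2 := hy2 b
    have e1 : ∀ a, twMul q (U a - U'' a) (Υ a b)
        = twMul q (U a) (Υ a b) - twMul q (U'' a) (Υ a b) :=
      fun a => TwAux.twMul_sub_left hq0 _ _ _
    have e2 : twMul q (C θ + X) (U b - U'' b)
        = twMul q (C θ + X) (U b) - twMul q (C θ + X) (U'' b) :=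
      TwAux.twMul_sub_right hq0 hsub _ _ _
    simp only [e1, e2, Finset.sum_sub_distrib]
    have : y b - δ' b = (δ b - δ' b) - (δ b - y b) := by ring
    rw [this, h1, h2]
    ring
  have KEY : ∀ m : ℕ, ∀ b : Fin n, n - m ≤ (b : ℕ) → (U b - U'' b = 0 ∧ y b = δ' b) := by
    intro m
    induction m with
    | zero =>
      intro b hb
      exact absurd hb (by have := b.isLt; omega)
    | succ m ihm =>
      intro b hb
      by_cases hcase : n - m ≤ (b : ℕ)
      · exact ihm b hcase
      · push_neg at hcase
        have hsumb : (∑ a, twMul q ((fun a => U a - U'' a) a) (Υ a b))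
            = twMul q (U b - U'' b) (Υ b b) := by
          rw [Finset.sum_eq_single b]
          · intro a _ hab
            rcases lt_or_gt_of_ne hab with hlt' | hgt'
            · rw [htri a b hlt', TwAux.twMul_zero_right]
            · have hna : n - m ≤ (a : ℕ) := by
                have h' : (b : ℕ) < (a : ℕ) := hgt'
                omega
              simp only [(ihm a hna).1, TwAux.twMul_zero_left]
          · intro hb'; exact absurd (Finset.mem_univ b) hb'
        have heqb : y b - δ' b
            = twMul q (U b - U'' b) (ψ b.rev) - twMul q (C θ + X) (U b - U'' b) := by
          rw [hWeq b, hsumb, hdiag b]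
        have hdegb : (y b - δ' b).natDegree < r b.rev :=
          lt_of_le_of_lt (natDegree_sub_le _ _) (max_lt (hy1 b).2 (hall b).1)
        have hW0 : U b - U'' b = 0 :=
          TwAux.drinfeld_unique hq0 (hdrin b.rev) (hr b.rev) _ _ hdegb heqb
        refine ⟨hW0, ?_⟩
        have hz : y b - δ' b = 0 := by
          rw [heqb, hW0, TwAux.twMul_zero_left, TwAux.twMul_zero_right, sub_self]
        exact sub_eq_zero.mp hz
  funext b
  exact (KEY n b (by omega)).2
end
end
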